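/- For every quantitative definite clause program P and every atom a, the supremum of the P-chain values at a is attained: there exists n ∈ ℕ such that sup{A_i a : i ∈ ℕ} = A_n a. -/
import Mathlib


/-- A quantitative definite clause: a head atom, a list of body atoms,
and a numerical factor. -/
structure QClause (α : Type*) where
  head : α
  body : List α
  factor : ℝ

variable {α : Type*}

/-- The minimum of the values of an interpretation over a list of atoms,
with the empty list yielding 1. -/
def bodyMin (I : α → ℝ) (l : List α) : ℝ := (l.map I).foldr min 1

/-- A quantitative definite clause program: a finite set of clauses whose
factors lie in (0,1]. -/
def QProgram (P : Set (QClause α)) : Prop :=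
  P.Finite ∧ ∀ c ∈ P, 0 < c.factor ∧ c.factor ≤ 1

/-- An interpretation assigns to each atom a value in [0,1]. -/
def IsInterp (I : α → ℝ) : Prop := ∀ a, 0 ≤ I a ∧ I a ≤ 1

/-- An interpretation is a model of `P` iff it is an interpretation and for
every clause `(h, [b₁,…,b_k], f)` of `P`, `I h ≥ f * min {I b₁, …, I b_k}`. -/
def IsModel (P : Set (QClause α)) (I : α → ℝ) : Prop :=
  IsInterp I ∧ ∀ c ∈ P, c.factor * bodyMin I c.body ≤ I c.head

/-- The `P`-chain: `A₀ a = 0` and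
`A_{i+1} a = sup { f * min {A_i b₁, …, A_i b_k} : (a,[b₁,…,b_k],f) ∈ P }`
(in ℝ, `sSup ∅ = 0`). -/
noncomputable def chain (P : Set (QClause α)) : ℕ → α → ℝ
  | 0, _ => 0
  | i + 1, a =>
      sSup {x | ∃ c ∈ P, c.head = a ∧ x = c.factor * bodyMin (chain P i) c.body}

/- ### Auxiliary lemmas -/

lemma bodyMin_le_one (I : α → ℝ) (l : List α) : bodyMin I l ≤ 1 := by
  induction l with
  | nil => simp [bodyMin]
  | cons b t ih =>
      simpa [bodyMin] using le_trans (min_le_right _ _) (by simpa [bodyMin] using ih)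

lemma bodyMin_nonneg {I : α → ℝ} (h : ∀ b, 0 ≤ I b) (l : List α) : 0 ≤ bodyMin I l := by
  induction l with
  | nil => simp [bodyMin]
  | cons b t ih => simpa [bodyMin] using le_min (h b) (by simpa [bodyMin] using ih)

lemma bodyMin_mono {I J : α → ℝ} (h : ∀ b, I b ≤ J b) (l : List α) :
    bodyMin I l ≤ bodyMin J l := by
  induction l with
  | nil => simp [bodyMin]
  | cons b t ih =>
      simpa [bodyMin] using min_le_min (h b) (by simpa [bodyMin] using ih)

lemma bodyMin_cases (I : α → ℝ) (l : List α) :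
    bodyMin I l = 1 ∨ ∃ b ∈ l, bodyMin I l = I b := by
  induction l with
  | nil => left; simp [bodyMin]
  | cons b t ih =>
      have hb : bodyMin I (b :: t) = min (I b) (bodyMin I t) := by simp [bodyMin]
      rcases le_total (I b) (bodyMin I t) with h | h
      · right; exact ⟨b, by simp, by rw [hb, min_eq_left h]⟩
      · rw [hb, min_eq_right h]
        rcases ih with h1 | ⟨c, hc, hc'⟩
        · left; exact h1
        · right; exact ⟨c, by simp [hc], hc'⟩

/-- The defining set at stage `i+1`, head `a`. -/
def chainSet (P : Set (QClause α)) (i : ℕ) (a : α) : Set ℝ :=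
  {x | ∃ c ∈ P, c.head = a ∧ x = c.factor * bodyMin (chain P i) c.body}

lemma chain_succ (P : Set (QClause α)) (i : ℕ) (a : α) :
    chain P (i + 1) a = sSup (chainSet P i a) := rfl

lemma chainSet_finite {P : Set (QClause α)} (hP : QProgram P) (i : ℕ) (a : α) :
    (chainSet P i a).Finite := by
  apply Set.Finite.subset (hP.1.image (fun c => c.factor * bodyMin (chain P i) c.body))
  rintro x ⟨c, hc, -, rfl⟩
  exact ⟨c, hc, rfl⟩

lemma chain_nonneg {P : Set (QClause α)} (hP : QProgram P) :
    ∀ i a, 0 ≤ chain P i a := by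
  intro i
  induction i with
  | zero => intro a; simp [chain]
  | succ i ih =>
      intro a
      rw [chain_succ]
      apply Real.sSup_nonneg
      rintro x ⟨c, hc, -, rfl⟩
      exact mul_nonneg (hP.2 c hc).1.le (bodyMin_nonneg (fun b => ih b) _)

lemma chain_le_one {P : Set (QClause α)} (hP : QProgram P) :
    ∀ i a, chain P i a ≤ 1 := by
  intro i
  induction i with
  | zero => intro a; simp [chain]
  | succ i ih =>
      intro a
      rw [chain_succ]
      apply Real.sSup_le _ zero_le_one
      rintro x ⟨c, hc, -, rfl⟩
      exact mul_le_one₀ (hP.2 c hc).2 (bodyMin_nonneg (fun b => chain_nonneg hP i b) _)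
        (bodyMin_le_one _ _)

lemma chain_le_succ {P : Set (QClause α)} (hP : QProgram P) :
    ∀ i a, chain P i a ≤ chain P (i + 1) a := by
  intro i
  induction i with
  | zero => intro a; simpa [chain] using chain_nonneg hP 1 a
  | succ i ih =>
      intro a
      rw [chain_succ, chain_succ]
      apply Real.sSup_le _ (Real.sSup_nonneg ?_)
      · rintro x ⟨c, hc, hh, rfl⟩
        have hx : c.factor * bodyMin (chain P i) c.body ≤
            c.factor * bodyMin (chain P (i + 1)) c.body :=
          mul_le_mul_of_nonneg_left (bodyMin_mono (fun b => ih b) _) (hP.2 c hc).1.le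
        exact le_trans hx (le_csSup ((chainSet_finite hP (i + 1) a).bddAbove)
          ⟨c, hc, hh, rfl⟩)
      · rintro x ⟨c, hc, -, rfl⟩
        exact mul_nonneg (hP.2 c hc).1.le
          (bodyMin_nonneg (fun b => chain_nonneg hP (i + 1) b) _)

lemma chain_mono {P : Set (QClause α)} (hP : QProgram P) (a : α) :
    Monotone (fun i => chain P i a) :=
  monotone_nat_of_le_succ (fun i => chain_le_succ hP i a)

/-- Every chain value is 0 or a product of factors of clauses of `P`. -/
lemma chain_prod {P : Set (QClause α)} (hP : QProgram P) :
    ∀ i a, chain P i a = 0 ∨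
      ∃ l : List ℝ, (∀ y ∈ l, y ∈ QClause.factor '' P) ∧ chain P i a = l.prod := by
  intro i
  induction i with
  | zero => intro a; left; simp [chain]
  | succ i ih =>
      intro a
      rcases Set.eq_empty_or_nonempty (chainSet P i a) with he | hne
      · left; rw [chain_succ, he, Real.sSup_empty]
      · have hmem : sSup (chainSet P i a) ∈ chainSet P i a :=
          hne.csSup_mem (chainSet_finite hP i a)
        rcases hmem with ⟨c, hc, -, hx⟩
        rw [chain_succ, hx]
        rcases bodyMin_cases (chain P i) c.body with h1 | ⟨b, -, hb⟩
        · right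
          exact ⟨[c.factor], by simpa using ⟨c, hc, rfl⟩, by simp [h1]⟩
        · rw [hb]
          rcases ih b with h0 | ⟨l, hl, hl'⟩
          · left; rw [h0, mul_zero]
          · right
            exact ⟨c.factor :: l, by
              rintro y hy
              rcases List.mem_cons.1 hy with rfl | hy
              · exact ⟨c, hc, rfl⟩
              · exact hl y hy, by rw [hl', List.prod_cons]⟩

/-- Products of lists of bounded length with entries in a finite set form a finite set. -/
lemma finite_prod_lists (s : Set ℝ) (hs : s.Finite) :
    ∀ N : ℕ, {x : ℝ | ∃ l : List ℝ, (∀ y ∈ l, y ∈ s) ∧ l.length ≤ N ∧ x = l.prod}.Finite := by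
  intro N
  induction N with
  | zero =>
      apply Set.Finite.subset (Set.finite_singleton 1)
      rintro x ⟨l, -, hlen, rfl⟩
      simp only [Nat.le_zero, List.length_eq_zero_iff] at hlen
      simp [hlen]
  | succ N ih =>
      apply Set.Finite.subset (((hs.prod ih).image (fun p => p.1 * p.2)).insert 1)
      rintro x ⟨l, hmem, hlen, rfl⟩
      cases l with
      | nil => simp
      | cons b t =>
          right
          exact ⟨(b, t.prod), ⟨hmem b (by simp),
            ⟨t, fun y hy => hmem y (by simp [hy]), Nat.succ_le_succ_iff.1 hlen, rfl⟩⟩,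
            by simp⟩

/-- Products of factors that are at least `ε > 0` form a finite set. -/
lemma finite_large_prods {P : Set (QClause α)} (hP : QProgram P) {ε : ℝ} (hε : 0 < ε) :
    ({x : ℝ | ∃ l : List ℝ, (∀ y ∈ l, y ∈ QClause.factor '' P) ∧ x = l.prod}
      ∩ Set.Ici ε).Finite := by
  set F : Set ℝ := QClause.factor '' P with hF
  have hFfin : F.Finite := hP.1.image _
  have hFpos : ∀ y ∈ F, 0 < y ∧ y ≤ 1 := by
    rintro y ⟨c, hc, rfl⟩; exact hP.2 c hc
  set F' : Set ℝ := F \ {1} with hF'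
  have hF'fin : F'.Finite := hFfin.subset Set.diff_subset
  -- remove the 1's from a list: product is preserved
  have hfilter : ∀ l : List ℝ, (∀ y ∈ l, y ∈ F) →
      (l.filter (fun y => y ≠ 1)).prod = l.prod ∧
      ∀ y ∈ l.filter (fun y => y ≠ 1), y ∈ F' := by
    intro l hl
    induction l with
    | nil => simp
    | cons b t ih =>
        have hb : b ∈ F := hl b (by simp)
        have ht := ih (fun y hy => hl y (by simp [hy]))
        by_cases h1 : b = 1
        · subst h1
          constructor
          · rw [List.filter_cons_of_neg (by simp), ht.1]; simp
          · rw [List.filter_cons_of_neg (by simp)]; exact ht.2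
        · constructor
          · rw [List.filter_cons_of_pos (by simpa using h1), List.prod_cons, ht.1,
              List.prod_cons]
          · rw [List.filter_cons_of_pos (by simpa using h1)]
            intro y hy
            rcases List.mem_cons.1 hy with rfl | hy
            · exact ⟨hb, h1⟩
            · exact ht.2 y hy
  -- find a length bound N for lists over F' with product ≥ ε
  obtain ⟨N, hN⟩ : ∃ N : ℕ, ∀ l : List ℝ, (∀ y ∈ l, y ∈ F') → ε ≤ l.prod →
      l.length ≤ N := by
    rcases Set.eq_empty_or_nonempty F' with he | hne
    · exact ⟨0, fun l hl _ => by
        cases l with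
        | nil => simp
        | cons b t => exact absurd (hl b (by simp)) (by simp [he])⟩
    · have hm : sSup F' ∈ F' := hne.csSup_mem hF'fin
      set m := sSup F' with hmdef
      have hm1 : m < 1 := lt_of_le_of_ne (hFpos m hm.1).2 hm.2
      have hm0 : 0 < m := (hFpos m hm.1).1
      obtain ⟨N, hNpow⟩ := exists_pow_lt_of_lt_one hε hm1
      refine ⟨N, fun l hl hprod => ?_⟩
      by_contra hlen
      push_neg at hlen
      have hub : ∀ y ∈ l, y ≤ m := fun y hy => le_csSup hF'fin.bddAbove (hl y hy)
      have hple : l.prod ≤ m ^ l.length := by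
        clear hprod hlen
        induction l with
        | nil => simp
        | cons b t ih =>
            rw [List.prod_cons, List.length_cons, pow_succ, mul_comm (m ^ t.length) m]
            have htpos : 0 ≤ t.prod := List.prod_nonneg
              (fun y hy => (hFpos y (hl y (by simp [hy])).1).1.le)
            exact mul_le_mul (hub b (by simp))
              (ih (fun y hy => hl y (by simp [hy])) (fun y hy => hub y (by simp [hy])))
              htpos hm0.le
      have : l.prod < ε := lt_of_le_of_lt
        (le_trans hple (pow_le_pow_of_le_one hm0.le hm1.le hlen.le)) hNpow
      exact absurd hprod (not_le.2 this)
  -- conclude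
  apply Set.Finite.subset (finite_prod_lists F' hF'fin N)
  rintro x ⟨⟨l, hl, rfl⟩, hx⟩
  obtain ⟨hpr, hmem⟩ := hfilter l hl
  exact ⟨l.filter (fun y => y ≠ 1), hmem, hN _ hmem (by rw [hpr]; exact hx), hpr.symm⟩

/-- The supremum of the `P`-chain values at any atom is attained. -/
theorem stmt_3 (P : Set (QClause α)) (hP : QProgram P) (a : α) :
    ∃ n : ℕ, (⨆ i : ℕ, chain P i a) = chain P n a := by
  have hbdd : BddAbove (Set.range fun i => chain P i a) :=
    ⟨1, by rintro x ⟨i, rfl⟩; exact chain_le_one hP i a⟩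
  by_cases hz : ∀ i, chain P i a = 0
  · refine ⟨0, le_antisymm (Real.iSup_le (fun i => (hz i).le) le_rfl) ?_⟩
    simpa [chain] using le_ciSup hbdd 0
  · push_neg at hz
    obtain ⟨k, hk⟩ := hz
    have hε : 0 < chain P k a := lt_of_le_of_ne (chain_nonneg hP k a) (Ne.symm hk)
    have hfin : (Set.range fun i => chain P i a).Finite := by
      apply Set.Finite.subset
        (((Set.finite_Iio k).image (fun i => chain P i a)).union
          (finite_large_prods hP hε))
      rintro x ⟨i, rfl⟩
      rcases lt_or_ge i k with h | h
      · exact Or.inl ⟨i, h, rfl⟩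
      · refine Or.inr ⟨?_, le_trans le_rfl (chain_mono hP a h)⟩
        rcases chain_prod hP i a with h0 | ⟨l, hl, hl'⟩
        · have hle : chain P k a ≤ chain P i a := chain_mono hP a h
          rw [h0] at hle
          exact absurd hle (not_le.2 hε)
        · exact ⟨l, hl, hl'⟩
    have hmem : sSup (Set.range fun i => chain P i a) ∈ Set.range fun i => chain P i a :=
      (Set.range_nonempty _).csSup_mem hfin
    obtain ⟨n, hn⟩ := hmem
    exact ⟨n, hn.symm⟩
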